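/- arXiv:2108.13184 — 3 statements merged into one kernel-verified Lean document; each statement's English description precedes it below -/
import Mathlib

section
/- Let Ψ = α·e₀ + β·e₁ be a unit vector in ℂ² and let G = U_{|Ψ⟩} ∘ U_{|0⟩} be the Grover iterate with phases φ₁, φ₂. Then G(Ψ) = (Q − e^{iφ₁})·α·e₀ + (Q − 1)·β·e₁, where Q = (1 − e^{iφ₂})(e^{iφ₁}|α|² + |β|²) = (1 − e^{iφ₂})(1 − (1 − e^{iφ₁})|α|²). -/
/-!
Both reflections act inside the plane spanned by the orthonormal pair `e₀, e₁`. The phase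
shift `U_{|0⟩}` multiplies the `e₀`-coordinate of `Ψ` by `e^{iφ₁}`, so `⟪Ψ, U_{|0⟩} Ψ⟫` is
`e^{iφ₁}|α|² + |β|²`; hence `G Ψ = Q • Ψ - U_{|0⟩} Ψ`, which is the claimed vector.
-/

open scoped InnerProductSpace ComplexConjugate

namespace Orthonormal

variable {ι E : Type*} [NormedAddCommGroup E] [InnerProductSpace ℂ E] {v : ι → E} {i j : ι}

theorem inner_smul_add_smul (hv : Orthonormal ℂ v) (hij : i ≠ j) (a b c d : ℂ) :
    ⟪a • v i + b • v j, c • v i + d • v j⟫_ℂ = conj a * c + conj b * d := by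
  simp [hv.inner_eq_zero hij, hv.inner_eq_zero hij.symm, inner_self_eq_norm_sq_to_K, hv.1 i, hv.1 j]
  ring

theorem inner_left_smul_add_smul (hv : Orthonormal ℂ v) (hij : i ≠ j) (a b : ℂ) :
    ⟪v i, a • v i + b • v j⟫_ℂ = a := by
  simpa using hv.inner_smul_add_smul hij 1 0 a b

theorem phaseShift_smul_add_smul (hv : Orthonormal ℂ v) (hij : i ≠ j) (ω a b : ℂ) :
    a • v i + b • v j - (1 - ω) • (⟪v i, a • v i + b • v j⟫_ℂ • v i) =
      (ω * a) • v i + b • v j := by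
  rw [hv.inner_left_smul_add_smul hij]
  module

end Orthonormal

theorem stmt_3 (φ₁ φ₂ : ℝ) (α β : ℂ)
    (hnorm : ‖α‖ ^ 2 + ‖β‖ ^ 2 = 1)
    (e0 e1 : EuclideanSpace ℂ (Fin 2))
    (he0 : e0 = EuclideanSpace.single 0 1)
    (he1 : e1 = EuclideanSpace.single 1 1)
    (Ψ : EuclideanSpace ℂ (Fin 2)) (hΨ : Ψ = α • e0 + β • e1)
    (U0 UΨ G : EuclideanSpace ℂ (Fin 2) → EuclideanSpace ℂ (Fin 2))
    (hU0 : ∀ x, U0 x = x - (1 - Complex.exp (Complex.I * φ₁)) • (⟪e0, x⟫_ℂ • e0))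
    (hUΨ : ∀ x, UΨ x = (1 - Complex.exp (Complex.I * φ₂)) • (⟪Ψ, x⟫_ℂ • Ψ) - x)
    (hG : ∀ x, G x = UΨ (U0 x))
    (Q : ℂ)
    (hQ : Q = (1 - Complex.exp (Complex.I * φ₂)) *
      (Complex.exp (Complex.I * φ₁) * ((‖α‖ : ℂ) ^ 2) + (‖β‖ : ℂ) ^ 2)) :
    G Ψ = ((Q - Complex.exp (Complex.I * φ₁)) * α) • e0 + ((Q - 1) * β) • e1 ∧
      Q = (1 - Complex.exp (Complex.I * φ₂)) *
        (1 - (1 - Complex.exp (Complex.I * φ₁)) * ((‖α‖ : ℂ) ^ 2)) := by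
  set ω₁ := Complex.exp (Complex.I * φ₁)
  set ω₂ := Complex.exp (Complex.I * φ₂)
  set v := EuclideanSpace.basisFun (Fin 2) ℂ
  have hv : Orthonormal ℂ v := v.orthonormal
  have h01 : (0 : Fin 2) ≠ 1 := by decide
  have he0v : e0 = v 0 := by rw [he0, EuclideanSpace.basisFun_apply]
  have he1v : e1 = v 1 := by rw [he1, EuclideanSpace.basisFun_apply]
  subst he0v he1v
  have hU0Ψ : U0 Ψ = (ω₁ * α) • v 0 + β • v 1 := by
    rw [hU0, hΨ, hv.phaseShift_smul_add_smul h01]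
  have hinner : ⟪Ψ, U0 Ψ⟫_ℂ = ω₁ * (‖α‖ : ℂ) ^ 2 + (‖β‖ : ℂ) ^ 2 := by
    rw [hU0Ψ, hΨ, hv.inner_smul_add_smul h01, ← Complex.conj_mul', ← Complex.conj_mul']
    ring
  refine ⟨?_, ?_⟩
  · rw [hG, hUΨ, hinner, ← mul_smul, ← hQ, hU0Ψ, hΨ]
    module
  · have hnorm' : (‖α‖ : ℂ) ^ 2 + (‖β‖ : ℂ) ^ 2 = 1 := by exact_mod_cast hnorm
    rw [hQ]
    linear_combination (1 - ω₂) * hnorm'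
end

section
/- Let Ψ = α·e₀ + β·e₁ with |α|² + |β|² = 1, and let G be the Grover iterate with phases φ₁, φ₂. Then the squared |0⟩-amplitude of G(Ψ) equals |R|²·|α|², where R = (1 − e^{iφ₁} − e^{iφ₂}) − (1 − e^{iφ₁})(1 − e^{iφ₂})|α|²; equivalently, ⟨e₀, G(Ψ)⟩ = R·α. -/
open scoped InnerProductSpace

/-! With `cᵢ = 1 - exp(iφᵢ)`, `U₀` scales the `e₀`-amplitude by `1 - c₁`, and since `‖Ψ‖ = 1`,
`⟪Ψ, U₀ Ψ⟫ = 1 - c₁ |α|²`. Hence `⟪e₀, G Ψ⟫ = c₂ (1 - c₁ |α|²) α - (1 - c₁) α = R α`. Only these two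
inner products enter, so the computation holds for any unit vectors `e₀`, `Ψ` of any inner product
space; in `ℂ²` the unit length of `Ψ` is Pythagoras. -/

section PhaseShift

variable {𝕜 E : Type*} [RCLike 𝕜] [NormedAddCommGroup E] [InnerProductSpace 𝕜 E]

lemma inner_sub_smul_inner_smul_self {v : E} (hv : ‖v‖ = 1) (c : 𝕜) (x : E) :
    ⟪v, x - c • (⟪v, x⟫_𝕜 • v)⟫_𝕜 = (1 - c) * ⟪v, x⟫_𝕜 := by
  rw [inner_sub_right, inner_smul_right, inner_smul_right, inner_self_eq_norm_sq_to_K, hv,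
    RCLike.ofReal_one, one_pow]
  ring

lemma inner_self_sub_smul_inner_smul {e x : E} (hx : ‖x‖ = 1) (c : 𝕜) :
    ⟪x, x - c • (⟪e, x⟫_𝕜 • e)⟫_𝕜 = 1 - c * (‖⟪e, x⟫_𝕜‖ : 𝕜) ^ 2 := by
  rw [inner_sub_right, inner_smul_right, inner_smul_right, inner_self_eq_norm_sq_to_K, hx,
    RCLike.ofReal_one, one_pow, ← inner_conj_symm x e, RCLike.mul_conj]

lemma norm_smul_add_smul_sq {u v : E} (hu : ‖u‖ = 1) (hv : ‖v‖ = 1) (huv : ⟪u, v⟫_𝕜 = 0)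
    (a b : 𝕜) : ‖a • u + b • v‖ ^ 2 = ‖a‖ ^ 2 + ‖b‖ ^ 2 := by
  rw [sq, norm_add_sq_eq_norm_sq_add_norm_sq_of_inner_eq_zero (𝕜 := 𝕜), norm_smul, norm_smul,
    hu, hv]
  · ring
  · rw [inner_smul_left, inner_smul_right, huv, mul_zero, mul_zero]

theorem inner_grover_iterate {e x : E} (he : ‖e‖ = 1) (hx : ‖x‖ = 1) (c₁ c₂ : 𝕜) :
    ⟪e, c₂ • (⟪x, x - c₁ • (⟪e, x⟫_𝕜 • e)⟫_𝕜 • x) - (x - c₁ • (⟪e, x⟫_𝕜 • e))⟫_𝕜 =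
      (c₁ + c₂ - 1 - c₁ * c₂ * (‖⟪e, x⟫_𝕜‖ : 𝕜) ^ 2) * ⟪e, x⟫_𝕜 := by
  rw [inner_sub_right, inner_smul_right, inner_smul_right, inner_self_sub_smul_inner_smul hx,
    inner_sub_smul_inner_smul_self he]
  ring

end PhaseShift

theorem stmt_7 (φ₁ φ₂ : ℝ) (α β : ℂ)
    (hnorm : ‖α‖ ^ 2 + ‖β‖ ^ 2 = 1)
    (e0 e1 : EuclideanSpace ℂ (Fin 2))
    (he0 : e0 = EuclideanSpace.single 0 1)
    (he1 : e1 = EuclideanSpace.single 1 1)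
    (Ψ : EuclideanSpace ℂ (Fin 2)) (hΨ : Ψ = α • e0 + β • e1)
    (U0 UΨ G : EuclideanSpace ℂ (Fin 2) → EuclideanSpace ℂ (Fin 2))
    (hU0 : ∀ x, U0 x = x - (1 - Complex.exp (Complex.I * φ₁)) • (⟪e0, x⟫_ℂ • e0))
    (hUΨ : ∀ x, UΨ x = (1 - Complex.exp (Complex.I * φ₂)) • (⟪Ψ, x⟫_ℂ • Ψ) - x)
    (hG : ∀ x, G x = UΨ (U0 x))
    (R : ℂ)
    (hR : R = (1 - Complex.exp (Complex.I * φ₁) - Complex.exp (Complex.I * φ₂)) -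
      (1 - Complex.exp (Complex.I * φ₁)) * (1 - Complex.exp (Complex.I * φ₂)) *
        ((‖α‖ : ℂ) ^ 2)) :
    ⟪e0, G Ψ⟫_ℂ = R * α ∧
      ‖⟪e0, G Ψ⟫_ℂ‖ ^ 2 = ‖R‖ ^ 2 * ‖α‖ ^ 2 := by
  have he0_norm : ‖e0‖ = 1 := by simp [he0]
  have he1_norm : ‖e1‖ = 1 := by simp [he1]
  have horth : ⟪e0, e1⟫_ℂ = 0 := by simp [he0, he1, EuclideanSpace.inner_single_left]
  have hamp : ⟪e0, Ψ⟫_ℂ = α := by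
    rw [hΨ, inner_add_right, inner_smul_right, inner_smul_right, horth,
      inner_self_eq_norm_sq_to_K, he0_norm]
    simp
  have hΨ_norm : ‖Ψ‖ = 1 := by
    have hpyth := norm_smul_add_smul_sq he0_norm he1_norm horth α β
    rwa [← hΨ, hnorm, pow_eq_one_iff_of_nonneg (norm_nonneg _) two_ne_zero] at hpyth
  have key : ⟪e0, G Ψ⟫_ℂ = R * α := by
    rw [hG, hUΨ, hU0, inner_grover_iterate he0_norm hΨ_norm, hamp, hR,
      RCLike.ofReal_eq_complex_ofReal]
    ring
  exact ⟨key, by rw [key, norm_mul, mul_pow]⟩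
end

section
/- For the uniform superposition |+⟩ = (e₀ + e₁)/√2 and one Grover iteration with phases φ₁, φ₂, the resulting state is (P − e^{iφ₁})·(√2/2)·e₀ + (P − 1)·(√2/2)·e₁ where P = (1 − e^{iφ₂})(1 − ½(1 − e^{iφ₁})), and consequently the collapse probability onto e₀ equals ½·|P − e^{iφ₁}|². -/
/-!
With `c = √2/2` and `y = U₀ |+⟩ = |+⟩ - (1 - e^{iφ₁}) c e₀`, the amplitude `⟪+, y⟫` equals
`1 - (1 - e^{iφ₁}) |c|² = 1 - ½ (1 - e^{iφ₁})`, so `G |+⟩ = (P - 1) |+⟩ + (1 - e^{iφ₁}) c e₀`;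
expanding `|+⟩ = c e₀ + c e₁` gives the state, and its `e₀`-amplitude has modulus squared
`|c|² |P - e^{iφ₁}|²`.
-/

open scoped InnerProductSpace

section

variable {𝕜 E : Type*} [RCLike 𝕜] [NormedAddCommGroup E] [InnerProductSpace 𝕜 E]

lemma inner_sub_smul_inner_smul_of_norm_eq_one {v : E} (hv : ‖v‖ = 1) (u : E) (α : 𝕜) :
    ⟪v, v - α • (⟪u, v⟫_𝕜 • u)⟫_𝕜 = 1 - α * ((‖⟪u, v⟫_𝕜‖ ^ 2 : ℝ) : 𝕜) := by
  rw [inner_sub_right, inner_smul_right, inner_smul_right, inner_self_eq_norm_sq_to_K, hv,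
    ← inner_conj_symm v u, RCLike.mul_conj]
  simp

lemma smul_inner_smul_sub_of_norm_eq_one {v : E} (hv : ‖v‖ = 1) (u : E) (α β : 𝕜) :
    β • (⟪v, v - α • (⟪u, v⟫_𝕜 • u)⟫_𝕜 • v) - (v - α • (⟪u, v⟫_𝕜 • u)) =
      (β * (1 - α * ((‖⟪u, v⟫_𝕜‖ ^ 2 : ℝ) : 𝕜)) - 1) • v + (α * ⟪u, v⟫_𝕜) • u := by
  rw [inner_sub_smul_inner_smul_of_norm_eq_one hv]
  module

variable {e₀ e₁ : E}

lemma inner_smul_add_smul_eq_of_norm_eq_one (h₀ : ‖e₀‖ = 1) (h₀₁ : ⟪e₀, e₁⟫_𝕜 = 0) (a b : 𝕜) :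
    ⟪e₀, a • e₀ + b • e₁⟫_𝕜 = a := by
  simp [inner_add_right, inner_smul_right, inner_self_eq_norm_sq_to_K, h₀, h₀₁]

lemma norm_smul_add_smul_eq_one (h₀ : ‖e₀‖ = 1) (h₁ : ‖e₁‖ = 1) (h₀₁ : ⟪e₀, e₁⟫_𝕜 = 0) {c : 𝕜}
    (hc : ‖c‖ ^ 2 = 1 / 2) : ‖c • e₀ + c • e₁‖ = 1 := by
  have hsq := norm_add_sq_eq_norm_sq_add_norm_sq_of_inner_eq_zero (𝕜 := 𝕜) (c • e₀) (c • e₁)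
    (by rw [inner_smul_left, inner_smul_right, h₀₁, mul_zero, mul_zero])
  rw [norm_smul, norm_smul, h₀, h₁, mul_one, ← sq, ← sq, hc] at hsq
  exact (pow_eq_one_iff_of_nonneg (norm_nonneg _) two_ne_zero).1 (by linarith)

end

theorem stmt_8 (φ₁ φ₂ : ℝ)
    (e0 e1 : EuclideanSpace ℂ (Fin 2))
    (he0 : e0 = EuclideanSpace.single 0 1)
    (he1 : e1 = EuclideanSpace.single 1 1)
    (plus : EuclideanSpace ℂ (Fin 2))
    (hplus : plus = ((Real.sqrt 2 / 2 : ℝ) : ℂ) • e0 + ((Real.sqrt 2 / 2 : ℝ) : ℂ) • e1)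
    (U0 Uplus G : EuclideanSpace ℂ (Fin 2) → EuclideanSpace ℂ (Fin 2))
    (hU0 : ∀ x, U0 x = x - (1 - Complex.exp (Complex.I * φ₁)) • (⟪e0, x⟫_ℂ • e0))
    (hUplus : ∀ x, Uplus x = (1 - Complex.exp (Complex.I * φ₂)) • (⟪plus, x⟫_ℂ • plus) - x)
    (hG : ∀ x, G x = Uplus (U0 x))
    (P : ℂ)
    (hP : P = (1 - Complex.exp (Complex.I * φ₂)) *
      (1 - (1 / 2) * (1 - Complex.exp (Complex.I * φ₁)))) :
    G plus = ((P - Complex.exp (Complex.I * φ₁)) * ((Real.sqrt 2 / 2 : ℝ) : ℂ)) • e0 +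
        ((P - 1) * ((Real.sqrt 2 / 2 : ℝ) : ℂ)) • e1 ∧
      ‖⟪e0, G plus⟫_ℂ‖ ^ 2 =
        (1 / 2) * ‖P - Complex.exp (Complex.I * φ₁)‖ ^ 2 := by
  set c : ℂ := ((√2 / 2 : ℝ) : ℂ)
  have hc : ‖c‖ ^ 2 = 1 / 2 := by
    rw [Complex.norm_real, Real.norm_eq_abs, sq_abs, div_pow, Real.sq_sqrt zero_le_two]
    norm_num
  have he0n : ‖e0‖ = 1 := by simp [he0]
  have he1n : ‖e1‖ = 1 := by simp [he1]
  have he01 : ⟪e0, e1⟫_ℂ = 0 := by simp [he0, he1, EuclideanSpace.inner_single_left]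
  have he0plus : ⟪e0, plus⟫_ℂ = c := by
    rw [hplus, inner_smul_add_smul_eq_of_norm_eq_one he0n he01]
  have hGplus : G plus = (P - 1) • plus + ((1 - Complex.exp (Complex.I * φ₁)) * c) • e0 := by
    rw [hG, hU0, hUplus, ← he0plus,
      smul_inner_smul_sub_of_norm_eq_one (hplus ▸ norm_smul_add_smul_eq_one he0n he1n he01 hc),
      he0plus, hc, hP]
    push_cast
    ring_nf
  have hstate : G plus = ((P - Complex.exp (Complex.I * φ₁)) * c) • e0 + ((P - 1) * c) • e1 := by
    rw [hGplus, hplus]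
    module
  refine ⟨hstate, ?_⟩
  rw [hstate, inner_smul_add_smul_eq_of_norm_eq_one he0n he01, norm_mul, mul_pow, hc, mul_comm]
end
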